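/- arXiv:1507.08792 — 2 statements merged into one kernel-verified Lean document; each statement's English description precedes it below -/
import Mathlib

section
/- Let H be a finite family of graphs, each of which is connected, has diameter at most two, and has the property that the neighborhood of every vertex induces a connected subgraph. Let G' be obtained from G by splitting a vertex v into one vertex per component of G[N(v)]. Then there exists a set of at most k edges of G whose deletion makes G H-free if and only if there exists a set of at most k edges of G' whose deletion makes G' H-free. -/
/-!
The projection `splitGraph G v → G` sending every new vertex to `v` is a graph homomorphism
that is injective on edges and restricts to an induced embedding on every closed
neighbourhood, so deletion sets correspond along it with the same size. In a connected graph
of diameter at most two any two vertices share a closed neighbourhood, hence a copy of it in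
`G' - S'` projects to a copy in `G - S`. Conversely, a copy in `G - S` of a graph with connected
neighbourhoods lifts to `G' - S'`: a vertex sent to `v` has its neighbourhood sent into a
single component of `G[N(v)]`, and is lifted to the new vertex of that component.
-/

/-- The graph obtained from `G` by splitting the vertex `v`: `v` is deleted and replaced
by one new vertex per connected component of `G[N(v)]`, each new vertex being adjacent
exactly to the vertices of its component; new vertices are pairwise non-adjacent. -/
def splitGraph {V : Type*} (G : SimpleGraph V) (v : V) :
    SimpleGraph ({u : V // u ≠ v} ⊕ (G.induce (G.neighborSet v)).ConnectedComponent) where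
  Adj a b :=
    match a, b with
    | Sum.inl u, Sum.inl w => G.Adj u.1 w.1
    | Sum.inl u, Sum.inr c => ∃ h : u.1 ∈ G.neighborSet v,
        (G.induce (G.neighborSet v)).connectedComponentMk ⟨u.1, h⟩ = c
    | Sum.inr c, Sum.inl u => ∃ h : u.1 ∈ G.neighborSet v,
        (G.induce (G.neighborSet v)).connectedComponentMk ⟨u.1, h⟩ = c
    | Sum.inr _, Sum.inr _ => False
  symm := by
    constructor
    rintro (u | c) (w | d) h
    · exact h.symm
    · exact h
    · exact h
    · exact h
  loopless := by
    constructor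
    rintro (u | c) h
    · exact G.irrefl h
    · exact h

open SimpleGraph

namespace SimpleGraph

variable {V V' W : Type*} {G : SimpleGraph V} {G' : SimpleGraph V'} {K : SimpleGraph W}

lemma Connected.exists_common_closedNbhd (hK : K.Connected) {x y : W} (h : K.dist x y ≤ 2) :
    ∃ z, (x = z ∨ K.Adj z x) ∧ (y = z ∨ K.Adj z y) := by
  obtain ⟨p, hp⟩ := hK.exists_walk_length_eq_dist x y
  rw [← hp] at h
  match p with
  | .nil => exact ⟨x, .inl rfl, .inl rfl⟩
  | .cons hxy .nil => exact ⟨x, .inl rfl, .inr hxy⟩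
  | .cons hxz (.cons hzy .nil) => exact ⟨_, .inr hxz.symm, .inr hzy⟩
  | .cons _ (.cons _ (.cons _ _)) => simp at h

def Hom.IsLocalEmbedding (φ : G' →g G) : Prop :=
  ∀ ⦃z a b : V'⦄, (a = z ∨ G'.Adj z a) → (b = z ∨ G'.Adj z b) →
    (φ a = φ b → a = b) ∧ (G.Adj (φ a) (φ b) → G'.Adj a b)

namespace Hom

variable (φ : G' →g G) {S : Set (Sym2 V)} {S' : Set (Sym2 V')}

lemma deleteEdges_map_adj (hS : ∀ e ∈ G'.edgeSet, Sym2.map φ e ∈ S ↔ e ∈ S') {a b : V'}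
    (h : (G'.deleteEdges S').Adj a b) : (G.deleteEdges S).Adj (φ a) (φ b) := by
  rw [deleteEdges_adj] at h ⊢
  exact ⟨φ.map_adj h.1, fun hS' => h.2 ((hS _ h.1).mp hS')⟩

lemma deleteEdges_adj_iff (hS : ∀ e ∈ G'.edgeSet, Sym2.map φ e ∈ S ↔ e ∈ S') {a b : V'}
    (hab : (G.deleteEdges S).Adj (φ a) (φ b) → G'.Adj a b) :
    (G'.deleteEdges S').Adj a b ↔ (G.deleteEdges S).Adj (φ a) (φ b) := by
  refine ⟨φ.deleteEdges_map_adj hS, fun h => ?_⟩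
  have hG' := hab h
  exact deleteEdges_adj.mpr ⟨hG', fun hS' => (deleteEdges_adj.mp h).2 ((hS _ hG').mpr hS')⟩

lemma exists_deleteEdges_pullback (hinj : Set.InjOn (Sym2.map φ) G'.edgeSet)
    (S : Set (Sym2 V)) :
    ∃ S' : Set (Sym2 V'), S'.encard ≤ S.encard ∧
      ∀ e ∈ G'.edgeSet, Sym2.map φ e ∈ S ↔ e ∈ S' := by
  refine ⟨Sym2.map φ ⁻¹' S ∩ G'.edgeSet, ?_, fun e he => ⟨fun h => ⟨h, he⟩, fun h => h.1⟩⟩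
  calc (Sym2.map φ ⁻¹' S ∩ G'.edgeSet).encard
      = (Sym2.map φ '' (Sym2.map φ ⁻¹' S ∩ G'.edgeSet)).encard :=
        ((hinj.mono Set.inter_subset_right).encard_image).symm
    _ ≤ S.encard := Set.encard_mono (by rintro _ ⟨e, ⟨heS, -⟩, rfl⟩; exact heS)

lemma exists_deleteEdges_pushforward (hinj : Set.InjOn (Sym2.map φ) G'.edgeSet)
    (S' : Set (Sym2 V')) :
    ∃ S : Set (Sym2 V), S.encard ≤ S'.encard ∧
      ∀ e ∈ G'.edgeSet, Sym2.map φ e ∈ S ↔ e ∈ S' := by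
  refine ⟨Sym2.map φ '' (S' ∩ G'.edgeSet), ?_, fun e he => ⟨?_, fun h => ⟨e, ⟨h, he⟩, rfl⟩⟩⟩
  · exact (Set.encard_image_le _ _).trans (Set.encard_mono Set.inter_subset_left)
  · rintro ⟨e', ⟨he'S, he'⟩, heq⟩
    exact hinj he' he heq ▸ he'S

lemma IsLocalEmbedding.nonempty_embedding_deleteEdges {φ : G' →g G} (hφ : φ.IsLocalEmbedding)
    (hS : ∀ e ∈ G'.edgeSet, Sym2.map φ e ∈ S ↔ e ∈ S') (hK : K.Connected)
    (hdiam : ∀ x y, K.dist x y ≤ 2) (f : K ↪g G'.deleteEdges S') :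
    Nonempty (K ↪g G.deleteEdges S) := by
  have hf : ∀ {x y}, K.Adj x y → G'.Adj (f x) (f y) :=
    fun h => (deleteEdges_adj.mp (f.map_adj_iff.mpr h)).1
  have hlocal : ∀ x y, (φ (f x) = φ (f y) → f x = f y) ∧
      (G.Adj (φ (f x)) (φ (f y)) → G'.Adj (f x) (f y)) := by
    intro x y
    obtain ⟨z, hx, hy⟩ := hK.exists_common_closedNbhd (hdiam x y)
    exact hφ (hx.imp (congrArg f) hf) (hy.imp (congrArg f) hf)
  refine ⟨⟨⟨fun x => φ (f x), fun x y h => f.injective ((hlocal x y).1 h)⟩, fun {x y} => ?_⟩⟩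
  change (G.deleteEdges S).Adj (φ (f x)) (φ (f y)) ↔ K.Adj x y
  rw [← φ.deleteEdges_adj_iff hS fun h => (hlocal x y).2 (deleteEdges_adj.mp h).1]
  exact f.map_adj_iff

lemma nonempty_embedding_deleteEdges_of_lift
    (hS : ∀ e ∈ G'.edgeSet, Sym2.map φ e ∈ S ↔ e ∈ S') (g : K ↪g G.deleteEdges S)
    (l : K →g G') (hl : ∀ x, φ (l x) = g x) :
    Nonempty (K ↪g G'.deleteEdges S') := by
  refine ⟨⟨⟨l, fun x y h => g.injective (by rw [← hl, h, hl])⟩, fun {x y} => ?_⟩⟩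
  change (G'.deleteEdges S').Adj (l x) (l y) ↔ K.Adj x y
  rw [φ.deleteEdges_adj_iff hS fun h => l.map_adj (g.map_adj_iff.mp (by rwa [← hl, ← hl])),
    hl, hl]
  exact g.map_adj_iff

end Hom

end SimpleGraph

namespace splitGraph

variable {V : Type*} {G : SimpleGraph V} {v : V}

def proj (G : SimpleGraph V) (v : V) : splitGraph G v →g G where
  toFun
    | .inl u => u.1
    | .inr _ => v
  map_rel' {a b} h := by
    match a, b, h with
    | .inl _, .inl _, h => exact h
    | .inl _, .inr _, ⟨hu, _⟩ => exact hu.symm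
    | .inr _, .inl _, ⟨hu, _⟩ => exact hu

lemma eq_of_proj_eq_of_ne {a b}
    (h : proj G v a = proj G v b) (ha : proj G v a ≠ v) : a = b := by
  match a, b with
  | .inl _, .inl _ => exact congrArg Sum.inl (Subtype.ext h)
  | .inl u, .inr _ => exact absurd h u.2
  | .inr _, _ => exact absurd rfl ha

lemma eq_of_adj_inr_of_adj_inr {z}
    {c d : (G.induce (G.neighborSet v)).ConnectedComponent}
    (hc : (splitGraph G v).Adj z (.inr c)) (hd : (splitGraph G v).Adj z (.inr d)) : c = d := by
  match z, hc, hd with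
  | .inl _, ⟨_, hc⟩, ⟨_, hd⟩ => exact hc.symm.trans hd

lemma adj_inl_inr_of_mem_closedNbhd {z}
    {u : {u : V // u ≠ v}} {c : (G.induce (G.neighborSet v)).ConnectedComponent}
    (hu : .inl u = z ∨ (splitGraph G v).Adj z (.inl u))
    (hc : .inr c = z ∨ (splitGraph G v).Adj z (.inr c)) (hvu : G.Adj v u) :
    (splitGraph G v).Adj (.inl u) (.inr c) := by
  rcases hu with rfl | hzu
  · rcases hc with hcu | huc
    · cases hcu
    · exact huc
  rcases hc with rfl | hzc
  · exact hzu.symm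
  match z, hzc, hzu with
  | .inl w, ⟨_, hwc⟩, hwu =>
    refine ⟨hvu, Eq.trans ?_ hwc⟩
    exact ConnectedComponent.sound (Adj.reachable (G := G.induce _) (hwu.symm : G.Adj u.1 w.1))

lemma isLocalEmbedding_proj : (proj G v).IsLocalEmbedding := by
  intro z a b ha hb
  refine ⟨fun h => ?_, fun h => ?_⟩
  · by_cases hav : proj G v a = v
    · match a, b, ha, hb with
      | .inl u, _, _, _ => exact absurd hav u.2
      | .inr _, .inl w, _, _ => exact absurd h.symm w.2
      | .inr _, .inr _, .inl rfl, .inl hdc => exact hdc.symm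
      | .inr _, .inr _, .inl rfl, .inr hcd => exact hcd.elim
      | .inr _, .inr _, .inr hdc, .inl rfl => exact hdc.elim
      | .inr _, .inr _, .inr hzc, .inr hzd =>
        exact congrArg Sum.inr (eq_of_adj_inr_of_adj_inr hzc hzd)
    · exact eq_of_proj_eq_of_ne h hav
  · match a, b with
    | .inl _, .inl _ => exact h
    | .inl _, .inr _ => exact adj_inl_inr_of_mem_closedNbhd ha hb h.symm
    | .inr _, .inl _ => exact (adj_inl_inr_of_mem_closedNbhd hb ha h).symm
    | .inr _, .inr _ => exact absurd h G.irrefl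

lemma mk_eq_mk_of_proj_eq {a b c d}
    (hab : (splitGraph G v).Adj a b) (hcd : (splitGraph G v).Adj c d)
    (hac : proj G v a = proj G v c) (hbd : proj G v b = proj G v d) : s(a, b) = s(c, d) := by
  by_cases hav : proj G v a = v
  · have hbv : proj G v b ≠ v :=
      fun hbv => G.ne_of_adj ((proj G v).map_adj hab) (hav.trans hbv.symm)
    obtain rfl := eq_of_proj_eq_of_ne hbd hbv
    obtain rfl := (isLocalEmbedding_proj (.inr hab.symm) (.inr hcd.symm)).1 hac
    rfl
  · obtain rfl := eq_of_proj_eq_of_ne hac hav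
    obtain rfl := (isLocalEmbedding_proj (.inr hab) (.inr hcd)).1 hbd
    rfl

lemma injOn_map_proj_edgeSet : Set.InjOn (Sym2.map (proj G v)) (splitGraph G v).edgeSet := by
  intro e₁ he₁ e₂ he₂ h
  induction e₁ using Sym2.ind with | _ a b => ?_
  induction e₂ using Sym2.ind with | _ c d => ?_
  rw [mem_edgeSet] at he₁ he₂
  rw [Sym2.map_mk, Sym2.map_mk, Sym2.eq_iff] at h
  rcases h with ⟨hac, hbd⟩ | ⟨had, hbc⟩
  · exact mk_eq_mk_of_proj_eq he₁ he₂ hac hbd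
  · exact (mk_eq_mk_of_proj_eq he₁ he₂.symm had hbc).trans Sym2.eq_swap

lemma exists_lift {W : Type*} {K : SimpleGraph W}
    (hK : ∀ x, (K.induce (K.neighborSet x)).Connected) (g : K →g G) :
    ∃ l : K →g splitGraph G v, ∀ x, proj G v (l x) = g x := by
  classical
  let nbhdMap (x : W) (hx : g x = v) :
      K.induce (K.neighborSet x) →g G.induce (G.neighborSet v) :=
    { toFun := fun y => ⟨g y, hx ▸ g.map_adj y.2⟩, map_rel' := fun h => g.map_adj h }
  -- `Connected` includes nonemptiness: every vertex of `K` has a neighbour.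
  let comp (x : W) (hx : g x = v) :=
    (G.induce _).connectedComponentMk (nbhdMap x hx (hK x).nonempty.some)
  have hcomp : ∀ x hx y (hy : K.Adj x y),
      (G.induce _).connectedComponentMk (nbhdMap x hx ⟨y, hy⟩) = comp x hx :=
    fun x hx _ _ => ConnectedComponent.sound (((hK x).preconnected _ _).map _)
  let l (x : W) : {u : V // u ≠ v} ⊕ (G.induce (G.neighborSet v)).ConnectedComponent :=
    if hx : g x = v then .inr (comp x hx) else .inl ⟨g x, hx⟩
  have hl : ∀ x, proj G v (l x) = g x := by
    intro x
    simp only [l]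
    split_ifs with hx
    exacts [hx.symm, rfl]
  refine ⟨⟨l, fun {x y} hxy => ?_⟩, hl⟩
  have hG := g.map_adj hxy
  simp only [l]
  split_ifs with hx hy hy
  · exact absurd (hx ▸ hy ▸ hG) G.irrefl
  · exact ⟨_, hcomp x hx y hxy⟩
  · exact ⟨_, hcomp y hy x hxy.symm⟩
  · exact hG

end splitGraph

theorem stmt_6_general {V : Type*} (G : SimpleGraph V) (v : V) (k : ℕ)
    {ι : Type*} {W : ι → Type*} (H : ∀ i : ι, SimpleGraph (W i))
    (hconn : ∀ i, (H i).Connected)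
    (hdiam : ∀ i, ∀ a b : W i, (H i).dist a b ≤ 2)
    (hnbr : ∀ i, ∀ a : W i, ((H i).induce ((H i).neighborSet a)).Connected) :
    (∃ S : Set (Sym2 V), S.encard ≤ (k : ℕ∞) ∧
      ∀ i, IsEmpty (H i ↪g G.deleteEdges S)) ↔
    (∃ S : Set (Sym2 ({u : V // u ≠ v} ⊕ (G.induce (G.neighborSet v)).ConnectedComponent)),
      S.encard ≤ (k : ℕ∞) ∧
      ∀ i, IsEmpty (H i ↪g (splitGraph G v).deleteEdges S)) := by
  have hinj := splitGraph.injOn_map_proj_edgeSet (G := G) (v := v)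
  constructor
  · rintro ⟨S, hSk, hfree⟩
    obtain ⟨S', hS'S, hS⟩ := (splitGraph.proj G v).exists_deleteEdges_pullback hinj S
    refine ⟨S', hS'S.trans hSk, fun i => ⟨fun f => ?_⟩⟩
    obtain ⟨F⟩ := splitGraph.isLocalEmbedding_proj.nonempty_embedding_deleteEdges hS
      (hconn i) (hdiam i) f
    exact (hfree i).false F
  · rintro ⟨S', hS'k, hfree⟩
    obtain ⟨S, hSS', hS⟩ := (splitGraph.proj G v).exists_deleteEdges_pushforward hinj S'
    refine ⟨S, hSS'.trans hS'k, fun i => ⟨fun g => ?_⟩⟩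
    obtain ⟨l, hl⟩ :=
      splitGraph.exists_lift (hnbr i) ((Hom.ofLE (G.deleteEdges_le S)).comp g.toHom)
    obtain ⟨F⟩ := (splitGraph.proj G v).nonempty_embedding_deleteEdges_of_lift hS g l hl
    exact (hfree i).false F

/-- Safety of the vertex-split rule: if every graph in the finite family `H` is connected,
has diameter at most two and has connected neighborhoods, then `(G,k)` is a yes-instance
of `H`-free edge deletion iff `(G',k)` is, where `G'` is obtained by splitting `v`. -/
theorem stmt_6 {V : Type*} (G : SimpleGraph V) (v : V) (k : ℕ)
    {ι : Type*} [Finite ι] {W : ι → Type*} (H : ∀ i : ι, SimpleGraph (W i))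
    (hconn : ∀ i, (H i).Connected)
    (hdiam : ∀ i, ∀ a b : W i, (H i).dist a b ≤ 2)
    (hnbr : ∀ i, ∀ a : W i, ((H i).induce ((H i).neighborSet a)).Connected)
    (hv : (G.neighborSet v).Nonempty) :
    (∃ S : Set (Sym2 V), S.encard ≤ (k : ℕ∞) ∧
      ∀ i, IsEmpty (H i ↪g G.deleteEdges S)) ↔
    (∃ S : Set (Sym2 ({u : V // u ≠ v} ⊕ (G.induce (G.neighborSet v)).ConnectedComponent)),
      S.encard ≤ (k : ℕ∞) ∧
      ∀ i, IsEmpty (H i ↪g (splitGraph G v).deleteEdges S)) :=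
  stmt_6_general G v k H hconn hdiam hnbr
end

section
/- Let G be a graph, V_X a set of vertices such that G − V_X is diamond-free and every induced diamond of G has an edge with both endpoints in V_X, and C the vertex set of a maximal clique of G − V_X. Then every vertex u ∈ V(G) \ (V_X ∪ C) is adjacent to at most one vertex of C. -/
/-- The diamond graph: `K₄` minus one edge. -/
def diamondGraph : SimpleGraph (Fin 4) :=
  (SimpleGraph.completeGraph (Fin 4)).deleteEdges {s(0, 1)}

/-- A graph is diamond-free if it has no induced subgraph isomorphic to a diamond. -/
def DiamondFree {V : Type*} (G : SimpleGraph V) : Prop :=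
  IsEmpty (diamondGraph ↪g G)

/-!
If `u ∉ C` had two neighbours `a ≠ b` in `C`, maximality of `C` in `G - V_X` gives some `c ∈ C`
not adjacent to `u`; then `u, c, a, b` induce a diamond (with `uc` the missing edge) inside
`G - V_X`, which is diamond-free.
-/

namespace SimpleGraph

variable {V : Type*} (G : SimpleGraph V)

lemma diamondGraph_adj_iff (i j : Fin 4) :
    diamondGraph.Adj i j ↔ i ≠ j ∧ s(i, j) ≠ s(0, 1) := by
  simp [diamondGraph]

def diamondEmbedding {u c a b : V} (huc : u ≠ c) (hnuc : ¬G.Adj u c) (hua : G.Adj u a)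
    (hub : G.Adj u b) (hca : G.Adj c a) (hcb : G.Adj c b) (hab : G.Adj a b) :
    diamondGraph ↪g G where
  toFun := ![u, c, a, b]
  inj' := by
    intro i j hij
    fin_cases i <;> fin_cases j <;> simp_all [G.ne_of_adj]
  map_rel_iff' := by
    intro i j
    change G.Adj (![u, c, a, b] i) (![u, c, a, b] j) ↔ _
    rw [diamondGraph_adj_iff]
    fin_cases i <;> fin_cases j <;> simp_all [G.adj_comm]

lemma exists_not_adj_of_maximal {S C : Set V} {u : V} (hC : G.IsClique C)
    (hmax : ∀ D : Set V, G.IsClique D → D ⊆ S → C ⊆ D → D = C) (hCS : C ⊆ S) (huS : u ∈ S)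
    (huC : u ∉ C) : ∃ c ∈ C, ¬G.Adj u c := by
  by_contra! hadj
  have hclique : G.IsClique (insert u C) := hC.insert fun c hc _ => hadj c hc
  exact huC (hmax _ hclique (Set.insert_subset huS hCS) (Set.subset_insert u C) ▸
    Set.mem_insert u C)

end SimpleGraph

open SimpleGraph

theorem stmt_11_general {V : Type*} (G : SimpleGraph V) (VX : Set V)
    (hdf : DiamondFree (G.induce VXᶜ))
    (C : Set V) (hCdisj : C ⊆ VXᶜ) (hC : G.IsClique C)
    (hmax : ∀ D : Set V, G.IsClique D → D ⊆ VXᶜ → C ⊆ D → D = C) :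
    ∀ u : V, u ∉ VX → u ∉ C → (C ∩ G.neighborSet u).Subsingleton := by
  intro u huVX huC a ⟨haC, hua⟩ b ⟨hbC, hub⟩
  by_contra hab
  obtain ⟨c, hcC, hnuc⟩ := G.exists_not_adj_of_maximal hC hmax hCdisj huVX huC
  have huc : u ≠ c := fun h => huC (h ▸ hcC)
  have hca : G.Adj c a := hC hcC haC fun h => hnuc (h ▸ hua)
  have hcb : G.Adj c b := hC hcC hbC fun h => hnuc (h ▸ hub)
  exact hdf.false <| (G.induce VXᶜ).diamondEmbedding (u := ⟨u, huVX⟩) (c := ⟨c, hCdisj hcC⟩)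
    (a := ⟨a, hCdisj haC⟩) (b := ⟨b, hCdisj hbC⟩) (Subtype.coe_ne_coe.mp huc) hnuc hua hub
    hca hcb (hC haC hbC hab)

/-- Let `VX` be such that `G - VX` is diamond-free and every induced diamond of `G` has
an edge with both endpoints in `VX`, and let `C` be the vertex set of a maximal clique
of `G - VX`. Then every vertex outside `VX ∪ C` is adjacent to at most one vertex of
`C`. -/
theorem stmt_11 {V : Type*} (G : SimpleGraph V) (VX : Set V)
    (hdf : DiamondFree (G.induce VXᶜ))
    (hdia : ∀ f : diamondGraph ↪g G, ∃ x y : Fin 4,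
      diamondGraph.Adj x y ∧ f x ∈ VX ∧ f y ∈ VX)
    (C : Set V) (hCdisj : C ⊆ VXᶜ) (hC : G.IsClique C)
    (hmax : ∀ D : Set V, G.IsClique D → D ⊆ VXᶜ → C ⊆ D → D = C) :
    ∀ u : V, u ∉ VX → u ∉ C → (C ∩ G.neighborSet u).Subsingleton :=
  stmt_11_general G VX hdf C hCdisj hC hmax
end
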